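/- For every k ∈ {1,…,d}, the polynomial 1 − z_k² belongs to the ideal of ℝ[z₁,…,z_d] generated by the polynomials q̃_Θ, where Θ ranges over all d×d integer matrices each of whose columns is a 0-1 vector with exactly one or exactly two entries equal to 1, such that det Θ = ±1 and at least one column of Θ equals the k-th standard unit vector e_k. -/

import Mathlib

/-!
Rank the variables by `r` with `z_k` first. For every column `c`, the admissible factors
`1 + z_c` and `z_j + z_c` with `j` ranked below `c` span an ideal `I_c`; choosing one factor per
column gives a matrix that is unitriangular in the order `r`, so `∏ I_c` lies in the ideal of
the `q̃_Θ`. Since `(1 + z_c) - (z_j + z_c) = 1 - z_j`, each `I_c` contains `1 + z_c` and every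
`1 - z_j` with `j` below `c`; the identity `2a = (1 + z_c) a + (1 - z_c) a` then shows, column by
column, that `1 - z_k ∈ ∏_{c ≠ k} I_c`. Multiplying by `1 + z_k ∈ I_k` gives `1 - z_k²`.
-/

open MvPolynomial

/-- For a `d×d` integer matrix `Θ` each of whose columns is a 0-1 vector with exactly one
or two entries equal to 1, the modified polynomial `q̃_Θ(z) = ∏_{columns θ} r̃_θ(z)`, where
`r̃_θ(z) = (1+z_k)/2` if `θ = e_k` and `r̃_θ(z) = (z_j+z_k)/2` if `θ = e_j + e_k`, `j ≠ k`. -/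
noncomputable def qtilde {d : ℕ} (Θ : Matrix (Fin d) (Fin d) ℤ) : MvPolynomial (Fin d) ℝ :=
  ∏ c : Fin d,
    (C (1 / 2 : ℝ) *
      ((if (∑ i, Θ i c) = 1 then 1 else 0) + ∑ i : Fin d, C ((Θ i c : ℝ)) * X i))

theorem Ideal.mem_sup_span_mul_mul {R : Type*} [CommRing R] (h2 : IsUnit (2 : R)) {a x : R}
    {N I J : Ideal R} (ha : a ∈ N * J) (hN : N ≤ I) (hx : 1 + x ∈ I) :
    a ∈ (N ⊔ Ideal.span {1 - x}) * (I * J) := by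
  refine (Ideal.unit_mul_mem_iff_mem _ h2).mp ?_
  have hplus : (1 + x) * a ∈ N * (I * J) := by
    rw [mul_left_comm]; exact Ideal.mul_mem_mul hx ha
  have hminus : (1 - x) * a ∈ Ideal.span {1 - x} * (I * J) :=
    Ideal.mul_mem_mul (Ideal.mem_span_singleton_self _) (Ideal.mul_mono_left hN ha)
  rw [show 2 * a = (1 + x) * a + (1 - x) * a by ring]
  exact add_mem (Ideal.mul_mono_left le_sup_left hplus) (Ideal.mul_mono_left le_sup_right hminus)

theorem Matrix.det_eq_one_of_blockTriangular_equiv {n m R : Type*} [Fintype n] [DecidableEq n]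
    [Fintype m] [DecidableEq m] [LinearOrder m] [CommRing R] {M : Matrix n n R} (e : n ≃ m)
    (hdiag : ∀ i, M i i = 1) (htri : M.BlockTriangular e) : M.det = 1 := by
  rw [← det_submatrix_equiv_self e.symm M, det_of_isUpperTriangular]
  · simp [hdiag]
  · simpa using htri.submatrix (f := e.symm)

section FactorIdeal

variable {σ β R : Type*} [CommRing R]

noncomputable def factorIdeal [LT β] (r : σ → β) (c : σ) : Ideal (MvPolynomial σ R) :=
  Ideal.span ((fun o : Option σ => o.elim 1 X + X c) '' {o | ∀ j ∈ o, r j < r c})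

theorem one_add_X_mem_factorIdeal [LT β] (r : σ → β) (c : σ) :
    (1 + X c : MvPolynomial σ R) ∈ factorIdeal r c :=
  Ideal.subset_span ⟨none, by simp, rfl⟩

theorem one_sub_X_mem_factorIdeal [LT β] {r : σ → β} {c j : σ} (hj : r j < r c) :
    (1 - X j : MvPolynomial σ R) ∈ factorIdeal r c := by
  have hpartner : (X j + X c : MvPolynomial σ R) ∈ factorIdeal r c :=
    Ideal.subset_span ⟨some j, by simpa using hj, rfl⟩
  rw [show (1 - X j : MvPolynomial σ R) = (1 + X c) - (X j + X c) by ring]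
  exact sub_mem (one_add_X_mem_factorIdeal r c) hpartner

theorem prod_factorIdeal_le_span [LT β] [Fintype σ] (r : σ → β) :
    ∏ c, factorIdeal (R := R) r c ≤ Ideal.span {q | ∃ o : σ → Option σ,
      (∀ c, ∀ j ∈ o c, r j < r c) ∧ q = ∏ c, ((o c).elim 1 X + X c)} := by
  simp_rw [factorIdeal]
  rw [Ideal.prod_span]
  refine Ideal.span_mono fun _ hq => ?_
  obtain ⟨p, hp, rfl⟩ := (Set.mem_finsetProd _ _ _).mp hq
  choose o ho hpo using fun c => hp (Finset.mem_univ c)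
  exact ⟨o, ho, by simp only [hpo]⟩

variable [DecidableEq σ] [LinearOrder β]

theorem one_sub_X_mem_span_mul_prod_factorIdeal (h2 : IsUnit (2 : R)) {r : σ → β}
    (hr : Function.Injective r) {k : σ} (hk : ∀ c, r k ≤ r c) (S : Finset σ) (hkS : k ∉ S) :
    (1 - X k : MvPolynomial σ R) ∈
      Ideal.span ((fun j => 1 - X j) '' ↑(insert k S)) * ∏ c ∈ S, factorIdeal r c := by
  induction S using Finset.induction_on_max_value r with
  | empty => simp
  | insert c S hcS hmax ih =>
    have hck : c ≠ k := fun h => hkS (h ▸ Finset.mem_insert_self c S)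
    have hlt : ∀ j ∈ insert k S, r j < r c := by
      intro j hj
      rcases Finset.mem_insert.mp hj with rfl | hjS
      · exact lt_of_le_of_ne (hk c) (hr.ne hck.symm)
      · exact lt_of_le_of_ne (hmax j hjS) (hr.ne (ne_of_mem_of_not_mem hjS hcS))
    have hN : Ideal.span ((fun j => 1 - X j) '' ↑(insert k S)) ≤ factorIdeal (R := R) r c :=
      Ideal.span_le.mpr <| by
        rintro _ ⟨j, hj, rfl⟩
        exact one_sub_X_mem_factorIdeal (hlt j hj)
    have h2' : IsUnit (2 : MvPolynomial σ R) := by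
      simpa only [map_ofNat] using h2.map (C : R →+* MvPolynomial σ R)
    have hstep := Ideal.mem_sup_span_mul_mul h2' (ih fun h => hkS (Finset.mem_insert_of_mem h))
      hN (one_add_X_mem_factorIdeal r c)
    rwa [Finset.prod_insert hcS, Finset.insert_comm, Finset.coe_insert, Set.image_insert_eq,
      Ideal.span_insert, sup_comm]

theorem one_sub_X_sq_mem_prod_factorIdeal [Fintype σ] (h2 : IsUnit (2 : R)) {r : σ → β}
    (hr : Function.Injective r) {k : σ} (hk : ∀ c, r k ≤ r c) :
    (1 - X k ^ 2 : MvPolynomial σ R) ∈ ∏ c, factorIdeal r c := by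
  have hfactor : (1 - X k ^ 2 : MvPolynomial σ R) = (1 + X k) * (1 - X k) := by ring
  have hrest := Ideal.mul_le_right
    (one_sub_X_mem_span_mul_prod_factorIdeal h2 hr hk _ (Finset.notMem_erase k Finset.univ))
  rw [← Finset.mul_prod_erase _ _ (Finset.mem_univ k), hfactor]
  exact Ideal.mul_mem_mul (one_add_X_mem_factorIdeal r k) hrest

end FactorIdeal

section PartnerMatrix

variable {n : Type*} [DecidableEq n]

def partnerMatrix (g : n → Option n) : Matrix n n ℤ :=
  Matrix.of fun i c => if g c = some i then 1 else 0

theorem one_add_partnerMatrix_apply_eq_zero_or_one {g : n → Option n} (hg : ∀ c, g c ≠ some c)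
    (i c : n) : (1 + partnerMatrix g) i c = 0 ∨ (1 + partnerMatrix g) i c = 1 := by
  by_cases hic : i = c
  · subst hic; simp [partnerMatrix, hg]
  · by_cases h : g c = some i <;> simp [partnerMatrix, hic, h]

theorem one_add_partnerMatrix_apply_of_eq_none {g : n → Option n} {c : n} (hc : g c = none)
    (i : n) : (1 + partnerMatrix g) i c = if i = c then 1 else 0 := by
  simp [partnerMatrix, Matrix.one_apply, hc]

theorem sum_one_add_partnerMatrix_col [Fintype n] (g : n → Option n) (c : n) :
    ∑ i, (1 + partnerMatrix g) i c = (g c).elim 1 fun _ => 2 := by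
  rcases h : g c with _ | j
  · simp [partnerMatrix, Matrix.one_apply, h]
  · simp [partnerMatrix, Matrix.one_apply, h, Finset.sum_add_distrib]

theorem det_one_add_partnerMatrix [Fintype n] {m : Type*} [Fintype m] [DecidableEq m]
    [LinearOrder m] {g : n → Option n} (r : n ≃ m) (hg : ∀ c, ∀ j ∈ g c, r j < r c) :
    (1 + partnerMatrix g).det = 1 := by
  refine Matrix.det_eq_one_of_blockTriangular_equiv r (fun i => ?_) fun i c hci => ?_
  · simpa [partnerMatrix] using fun h => lt_irrefl _ (hg i i h)
  · have hic : i ≠ c := fun h => lt_irrefl _ (h ▸ hci)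
    have hpartner : g c ≠ some i := fun h => lt_asymm hci (hg c i h)
    simp [partnerMatrix, hic, hpartner]

end PartnerMatrix

theorem qtilde_one_add_partnerMatrix {d : ℕ} (g : Fin d → Option (Fin d)) :
    qtilde (1 + partnerMatrix g) = ∏ c, C (1 / 2 : ℝ) * ((g c).elim 1 X + X c) := by
  refine Finset.prod_congr rfl fun c _ => ?_
  rw [sum_one_add_partnerMatrix_col]
  rcases h : g c with _ | j
  · simp [partnerMatrix, Matrix.one_apply, h]
  · simp [partnerMatrix, Matrix.one_apply, h, add_mul, Finset.sum_add_distrib, add_comm]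

/-- For every `k`, the polynomial `1 − z_k²` lies in the ideal generated by the `q̃_Θ`
where `Θ` ranges over `d×d` integer matrices whose columns are 0-1 vectors with exactly
one or two ones, with `det Θ = ±1`, and having `e_k` among their columns. -/
theorem stmt_6 (d : ℕ) (k : Fin d) :
    (1 - X k ^ 2 : MvPolynomial (Fin d) ℝ) ∈ Ideal.span
      {q : MvPolynomial (Fin d) ℝ | ∃ Θ : Matrix (Fin d) (Fin d) ℤ,
        (∀ i c, Θ i c = 0 ∨ Θ i c = 1) ∧
        (∀ c, (∑ i, Θ i c) = 1 ∨ (∑ i, Θ i c) = 2) ∧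
        (Θ.det = 1 ∨ Θ.det = -1) ∧
        (∃ c, ∀ i, Θ i c = if i = k then 1 else 0) ∧
        q = qtilde Θ} := by
  set r : Fin d ≃ Fin d := Equiv.swap k ⟨0, k.pos⟩
  have hrk : ∀ c, r k ≤ r c := fun c => by simp [r, Fin.le_def]
  refine Ideal.span_le.mpr ?_ (prod_factorIdeal_le_span r
    (one_sub_X_sq_mem_prod_factorIdeal (isUnit_iff_ne_zero.mpr two_ne_zero) r.injective hrk))
  rintro _ ⟨g, hg, rfl⟩
  have hfix : ∀ c, g c ≠ some c := fun c h => lt_irrefl _ (hg c c h)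
  have hgk : g k = none := Option.eq_none_iff_forall_not_mem.mpr fun j hj =>
    (hg k j hj).not_ge (hrk j)
  have hprod :
      ∏ c, ((g c).elim 1 X + X c) = C ((2 : ℝ) ^ d) * qtilde (1 + partnerMatrix g) := by
    rw [qtilde_one_add_partnerMatrix, Finset.prod_mul_distrib, Finset.prod_const,
      Finset.card_univ, Fintype.card_fin, ← map_pow, ← mul_assoc, ← C_mul, ← mul_pow]
    norm_num
  rw [hprod]
  refine Ideal.mul_mem_left _ _ (Ideal.subset_span ⟨_, ?_, fun c => ?_, ?_, ?_, rfl⟩)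
  · exact one_add_partnerMatrix_apply_eq_zero_or_one hfix
  · rw [sum_one_add_partnerMatrix_col]
    cases g c <;> simp
  · exact Or.inl (det_one_add_partnerMatrix r hg)
  · exact ⟨k, one_add_partnerMatrix_apply_of_eq_none hgk⟩
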